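/- Distance to the null sphere: for every integrable positive measure μ on X, sup_{v ∈ S²} |S(μ)(v)| = √2 · pers(μ); i.e., the uniform distance between S(μ) and the zero function equals √2 times the total persistence of μ. -/

import Mathlib

open MeasureTheory

/-- The inner product of `ℝ³ = ℝ × ℝ × ℝ`. -/
noncomputable def inner3 (v a : ℝ × ℝ × ℝ) : ℝ :=
  v.1 * a.1 + v.2.1 * a.2.1 + v.2.2 * a.2.2

/-- The lift of a planar point: `(1, p) ∈ ℝ³`. -/
def lift (p : ℝ × ℝ) : ℝ × ℝ × ℝ := (1, p.1, p.2)

/-- The diagonal projection `π_Δ(x,y) = ((x+y)/2, (x+y)/2)`. -/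
noncomputable def piD (p : ℝ × ℝ) : ℝ × ℝ := ((p.1 + p.2) / 2, (p.1 + p.2) / 2)

/-- The persistence `pers(p) = (y−x)/2`. -/
noncomputable def pers (p : ℝ × ℝ) : ℝ := (p.2 - p.1) / 2

/-- The Euclidean norm of a point of `ℝ²`. -/
noncomputable def enorm2 (p : ℝ × ℝ) : ℝ := Real.sqrt (p.1 ^ 2 + p.2 ^ 2)

/-- The persistence sphere of `μ` evaluated at `v`. -/
noncomputable def PSph (μ : Measure (ℝ × ℝ)) (v : ℝ × ℝ × ℝ) : ℝ :=
  ∫ p, (max 0 (inner3 v (lift p)) - max 0 (inner3 v (lift (piD p)))) ∂μ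

/-- The unit sphere of `ℝ³` as a subtype. -/
def Sph2 : Type := {v : ℝ × ℝ × ℝ // v.1 ^ 2 + v.2.1 ^ 2 + v.2.2 ^ 2 = 1}


/-! Both `ReLU` terms of the integrand are evaluated at points whose inner products with `v`
differ by `(v₃ - v₂) · pers p`, and `ReLU` is `1`-Lipschitz, so on the unit sphere the
integrand is at most `√2 · pers p`. At `v = (0, -1/√2, 1/√2)` the diagonal term vanishes and
the first one equals `√2 · pers p ≥ 0` on `{x < y}`, so the bound is attained. -/

open Real

/-- The integrand `φ_v` of `PSph`. -/
noncomputable def psphKernel (v : ℝ × ℝ × ℝ) (p : ℝ × ℝ) : ℝ :=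
  max 0 (inner3 v (lift p)) - max 0 (inner3 v (lift (piD p)))

lemma PSph_eq_integral_psphKernel (μ : Measure (ℝ × ℝ)) (v : ℝ × ℝ × ℝ) :
    PSph μ v = ∫ p, psphKernel v p ∂μ := rfl

lemma abs_pers_le_enorm2 (p : ℝ × ℝ) : |pers p| ≤ enorm2 p :=
  abs_le_sqrt (by unfold pers; nlinarith [sq_nonneg (p.1 + p.2)])

lemma integrable_pers {μ : Measure (ℝ × ℝ)} (h : Integrable enorm2 μ) : Integrable pers μ :=
  h.mono (by unfold pers; fun_prop) <| .of_forall fun p => by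
    simpa [abs_of_nonneg (sqrt_nonneg _), enorm2] using abs_pers_le_enorm2 p

lemma inner3_lift_sub_inner3_lift_piD (v : ℝ × ℝ × ℝ) (p : ℝ × ℝ) :
    inner3 v (lift p) - inner3 v (lift (piD p)) = (v.2.2 - v.2.1) * pers p := by
  simp only [inner3, lift, piD, pers]; ring

lemma abs_snd_snd_sub_snd_fst_le_sqrt_two (v : Sph2) : |v.1.2.2 - v.1.2.1| ≤ √2 :=
  abs_le_sqrt (by nlinarith [v.2, sq_nonneg (v.1.2.1 + v.1.2.2), sq_nonneg v.1.1])

lemma abs_psphKernel_le (v : Sph2) (p : ℝ × ℝ) : |psphKernel v.1 p| ≤ √2 * |pers p| :=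
  calc |psphKernel v.1 p| ≤ |inner3 v.1 (lift p) - inner3 v.1 (lift (piD p))| := by
        simpa only [psphKernel, max_comm (0 : ℝ)] using abs_max_sub_max_le_abs _ _ 0
    _ = |v.1.2.2 - v.1.2.1| * |pers p| := by rw [inner3_lift_sub_inner3_lift_piD, abs_mul]
    _ ≤ √2 * |pers p| := by gcongr; exact abs_snd_snd_sub_snd_fst_le_sqrt_two v

lemma abs_PSph_le {μ : Measure (ℝ × ℝ)} (h : Integrable pers μ) (v : Sph2) :
    |PSph μ v.1| ≤ √2 * ∫ p, |pers p| ∂μ :=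
  calc |PSph μ v.1| ≤ ∫ p, |psphKernel v.1 p| ∂μ := abs_integral_le_integral_abs
    _ ≤ ∫ p, √2 * |pers p| ∂μ :=
        integral_mono_of_nonneg (.of_forall fun _ => abs_nonneg _) (h.abs.const_mul _)
          (.of_forall (abs_psphKernel_le v))
    _ = √2 * ∫ p, |pers p| ∂μ := integral_const_mul _ _

noncomputable def vPers : Sph2 :=
  ⟨(0, -(√2 / 2), √2 / 2), by norm_num [div_pow]⟩

lemma psphKernel_vPers (p : ℝ × ℝ) : psphKernel vPers.1 p = max 0 (√2 * pers p) := by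
  have h_diag : inner3 vPers.1 (lift (piD p)) = 0 := by
    simp only [inner3, vPers, lift, piD]; ring
  have h_lift : inner3 vPers.1 (lift p) = √2 * pers p := by
    simp only [inner3, vPers, lift, pers]; ring
  rw [psphKernel, h_diag, h_lift, max_self, sub_zero]

lemma PSph_vPers {μ : Measure (ℝ × ℝ)} (h : ∀ᵐ p ∂μ, 0 ≤ pers p) :
    PSph μ vPers.1 = √2 * ∫ p, pers p ∂μ := by
  rw [PSph_eq_integral_psphKernel, ← integral_const_mul]
  refine integral_congr_ae (h.mono fun p hp => ?_)
  rw [psphKernel_vPers, max_eq_right (by positivity)]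

lemma ae_pers_nonneg {μ : Measure (ℝ × ℝ)} (h : μ {p : ℝ × ℝ | ¬ p.1 < p.2} = 0) :
    ∀ᵐ p ∂μ, 0 ≤ pers p :=
  (measure_eq_zero_iff_ae_notMem.mp h).mono fun p hp => by
    simp only [Set.mem_ofPred_eq, not_not] at hp; unfold pers; linarith

theorem uniform_distance_to_null_sphere_general
    (μ : Measure (ℝ × ℝ))
    (hμX : μ {p : ℝ × ℝ | ¬ p.1 < p.2} = 0)
    (hμint : Integrable enorm2 μ) :
    (⨆ v : Sph2, |PSph μ v.1|) = Real.sqrt 2 * ∫ p, pers p ∂μ := by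
  have h_nonneg := ae_pers_nonneg hμX
  have h_abs : ∫ p, |pers p| ∂μ = ∫ p, pers p ∂μ :=
    integral_congr_ae (h_nonneg.mono fun p hp => abs_of_nonneg hp)
  have h_le (v : Sph2) : |PSph μ v.1| ≤ √2 * ∫ p, pers p ∂μ :=
    h_abs ▸ abs_PSph_le (integrable_pers hμint) v
  have h_attained : |PSph μ vPers.1| = √2 * ∫ p, pers p ∂μ := by
    rw [PSph_vPers h_nonneg, abs_of_nonneg (by positivity [integral_nonneg_of_ae h_nonneg])]
  have : Nonempty Sph2 := ⟨vPers⟩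
  exact le_antisymm (ciSup_le h_le)
    (le_ciSup_of_le ⟨_, Set.forall_mem_range.mpr h_le⟩ vPers h_attained.ge)

/-- Distance to the null sphere: for every integrable positive measure `μ` on `X`,
`sup_{v ∈ S²} |S(μ)(v)| = √2 · pers(μ)`. -/
theorem uniform_distance_to_null_sphere
    (μ : Measure (ℝ × ℝ)) (hμfin : IsFiniteMeasure μ)
    (hμX : μ {p : ℝ × ℝ | ¬ p.1 < p.2} = 0)
    (hμint : Integrable enorm2 μ) :
    (⨆ v : Sph2, |PSph μ v.1|) = Real.sqrt 2 * ∫ p, pers p ∂μ :=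
  uniform_distance_to_null_sphere_general μ hμX hμint
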